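/- arXiv:2405.18190 — 3 statements merged into one kernel-verified Lean document; each statement's English description precedes it below -/
import Mathlib

section
/- One step of the MBL-DPU update preserves the simplex: let A be a finite nonempty set, let x ∈ Δ(A), let c ∈ Δ(A) with c h > 0 for all h, let M ≥ 0 and M̄ > 0 with M ≤ M̄, let r be a real payoff with 0 ≤ r ≤ C for some C > 0, let the learning rate θ satisfy 0 < θ < (C + M̄)⁻¹, and let h₀ ∈ A be the chosen pure strategy. Define x' : A → ℝ by x' h = x h + θ·((1 − x h)·r + M·(c h − x h)) if h = h₀, and x' h = x h + θ·((− x h)·r + M·(c h − x h)) otherwise. Then x' h ≥ 0 for all h ∈ A and ∑_{h ∈ A} x' h = 1, i.e. x' ∈ Δ(A). -/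
/-- One step of the MBL-DPU update preserves the simplex. -/
theorem mbl_dpu_step_mem_simplex
    {A : Type*} [Fintype A] [Nonempty A]
    (x c : A → ℝ)
    (hx0 : ∀ h, 0 ≤ x h) (hx1 : ∑ h, x h = 1)
    (hc0 : ∀ h, 0 < c h) (hc1 : ∑ h, c h = 1)
    (M Mbar : ℝ) (hM0 : 0 ≤ M) (hMbar : 0 < Mbar) (hMMbar : M ≤ Mbar)
    (r C : ℝ) (hC : 0 < C) (hr0 : 0 ≤ r) (hrC : r ≤ C)
    (θ : ℝ) (hθ0 : 0 < θ) (hθ : θ < (C + Mbar)⁻¹)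
    (h₀ : A) [DecidableEq A]
    (x' : A → ℝ)
    (hx' : ∀ h, x' h =
      if h = h₀ then x h + θ * ((1 - x h) * r + M * (c h - x h))
      else x h + θ * ((-x h) * r + M * (c h - x h))) :
    (∀ h, 0 ≤ x' h) ∧ ∑ h, x' h = 1 := by
  have hpos : 0 < C + Mbar := by linarith
  have h1 : θ * (C + Mbar) < 1 := by
    calc θ * (C + Mbar) < (C + Mbar)⁻¹ * (C + Mbar) :=
          mul_lt_mul_of_pos_right hθ hpos
      _ = 1 := inv_mul_cancel₀ hpos.ne'
  have hsub : 0 ≤ 1 - θ * (r + M) := by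
    nlinarith [mul_le_mul_of_nonneg_left (add_le_add hrC hMMbar) hθ0.le]
  constructor
  · intro h
    rw [hx' h]
    split_ifs with heq <;>
      nlinarith [mul_nonneg (hx0 h) hsub, mul_nonneg (mul_nonneg hθ0.le hM0) (hc0 h).le,
        mul_nonneg hθ0.le hr0, hx0 h]
  · have key : ∀ h, x' h = ((1 - θ*r - θ*M) * x h + (θ*M) * c h)
        + (if h = h₀ then θ*r else 0) := by
      intro h
      rw [hx' h]
      split_ifs <;> ring
    rw [Finset.sum_congr rfl (fun h _ => key h), Finset.sum_add_distrib,
      Finset.sum_add_distrib, ← Finset.mul_sum, ← Finset.mul_sum, hx1, hc1,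
      Finset.sum_ite_eq' Finset.univ h₀]
    simp
end

section
/- The logistic-choice update of MBL-LC can be written as a direct policy update with a modified payoff: let A be a finite nonempty set, Q : A → ℝ, τ > 0, and define the logistic (softmax) policy x h = exp(τ · Q h) / ∑_{k ∈ A} exp(τ · Q k). Fix a ∈ A and δ ∈ ℝ, define Q' = Q except Q' a = Q a + δ, and let x' be the logistic policy for Q'. Set r̃ = (x a · (exp(τδ) − 1)) / (x a · (exp(τδ) − 1) + 1). Then x' a = x a + (1 − x a)·r̃ and, for every h ≠ a, x' h = x h − x h · r̃. -/
/-- The logistic-choice update of MBL-LC can be written as a direct policy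
update with a modified payoff. -/
theorem mbl_lc_update_as_direct_policy_update
    {A : Type*} [Fintype A] [Nonempty A] [DecidableEq A]
    (Q : A → ℝ) (τ : ℝ) (hτ : 0 < τ)
    (x : A → ℝ)
    (hx : ∀ h, x h = Real.exp (τ * Q h) / ∑ k, Real.exp (τ * Q k))
    (a : A) (δ : ℝ)
    (Q' : A → ℝ) (hQ' : ∀ h, Q' h = if h = a then Q a + δ else Q h)
    (x' : A → ℝ)
    (hx' : ∀ h, x' h = Real.exp (τ * Q' h) / ∑ k, Real.exp (τ * Q' k))
    (rTilde : ℝ)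
    (hrTilde : rTilde = (x a * (Real.exp (τ * δ) - 1)) / (x a * (Real.exp (τ * δ) - 1) + 1)) :
    x' a = x a + (1 - x a) * rTilde ∧ ∀ h, h ≠ a → x' h = x h - x h * rTilde := by
  set S : ℝ := ∑ k, Real.exp (τ * Q k) with hS
  have hSpos : 0 < S :=
    Finset.sum_pos (fun k _ => Real.exp_pos _) Finset.univ_nonempty
  have hSne : S ≠ 0 := ne_of_gt hSpos
  set c : ℝ := x a * (Real.exp (τ * δ) - 1) with hc
  have hterm : ∀ k, Real.exp (τ * Q' k)
      = Real.exp (τ * Q k) + (if k = a then Real.exp (τ * Q a) * (Real.exp (τ * δ) - 1) else 0) := by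
    intro k
    rw [hQ' k]
    by_cases hk : k = a
    · subst hk
      simp [mul_add, Real.exp_add]
      ring
    · simp [hk]
  have hsum : (∑ k, Real.exp (τ * Q' k)) = S * (1 + c) := by
    have : (∑ k, Real.exp (τ * Q' k))
        = S + ∑ k, (if k = a then Real.exp (τ * Q a) * (Real.exp (τ * δ) - 1) else 0) := by
      rw [hS, ← Finset.sum_add_distrib]
      exact Finset.sum_congr rfl fun k _ => hterm k
    rw [this, Finset.sum_ite_eq' Finset.univ a, if_pos (Finset.mem_univ a)]
    have hxa : x a = Real.exp (τ * Q a) / S := hx a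
    rw [hc, hxa]
    field_simp
  have hD : 0 < 1 + c := by
    have hpos : 0 < (∑ k, Real.exp (τ * Q' k)) :=
      Finset.sum_pos (fun k _ => Real.exp_pos _) Finset.univ_nonempty
    rw [hsum] at hpos
    nlinarith
  have hDne : (1 + c) ≠ 0 := ne_of_gt hD
  have hcDne : c + 1 ≠ 0 := by rw [add_comm]; exact hDne
  have hxa : x a = Real.exp (τ * Q a) / S := hx a
  have hE2 : Real.exp (τ * Q a) = x a * S := by rw [hxa]; field_simp
  constructor
  · rw [hx' a, hsum, hQ' a, if_pos rfl, hrTilde]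
    have hE : Real.exp (τ * (Q a + δ)) = Real.exp (τ * Q a) * Real.exp (τ * δ) := by
      rw [mul_add, Real.exp_add]
    rw [hE, hE2]
    field_simp
    rw [hc]
    ring
  · intro h hh
    rw [hx' h, hsum, hQ' h, if_neg hh, hrTilde, hx h]
    field_simp
    ring
end

section
/- Continuity of the hitting time: let E be a real normed vector space, D ⊆ E, V ⊆ D open in D, L > 0, and Φ : D × ℝ≥0 → D a map with ‖Φ(x, t) − Φ(y, t)‖ ≤ ‖x − y‖ · exp(L·t) for all x, y ∈ D and t ≥ 0. Define τ(x) = inf { T > 0 : Φ(x, T) ∈ V }. Assume (i) τ(x) < ∞ for every x ∈ D, and (ii) for every x ∈ D and every T with 0 < T < τ(x), inf { ‖Φ(x, t) − v‖ : v ∈ V, t ∈ [0, T] } > 0. Then τ : D → ℝ is continuous. -/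
/-- Continuity of the hitting time `τ x = sInf {T | 0 < T ∧ Φ x T ∈ V}` for a
flow with an exponential Lipschitz divergence bound, an open (in `D`) target
`V`, finite hitting times, and trajectories staying at positive distance from
`V` before their hitting time. -/
theorem hitting_time_continuous
    {E : Type*} [NormedAddCommGroup E] [NormedSpace ℝ E]
    (D V : Set E) (hVD : V ⊆ D)
    (hVopen : ∃ U : Set E, IsOpen U ∧ V = U ∩ D)
    (L : ℝ) (hL : 0 < L)
    (Φ : E → ℝ → E)
    (hΦD : ∀ x ∈ D, ∀ t : ℝ, 0 ≤ t → Φ x t ∈ D)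
    (hΦLip : ∀ x ∈ D, ∀ y ∈ D, ∀ t : ℝ, 0 ≤ t →
      ‖Φ x t - Φ y t‖ ≤ ‖x - y‖ * Real.exp (L * t))
    (hfin : ∀ x ∈ D, {T : ℝ | 0 < T ∧ Φ x T ∈ V}.Nonempty)
    (hpos : ∀ x ∈ D, ∀ T : ℝ, 0 < T →
      T < sInf {T' : ℝ | 0 < T' ∧ Φ x T' ∈ V} →
      0 < sInf {ρ : ℝ | ∃ v ∈ V, ∃ t ∈ Set.Icc (0 : ℝ) T, ρ = ‖Φ x t - v‖}) :
    ContinuousOn (fun x => sInf {T : ℝ | 0 < T ∧ Φ x T ∈ V}) D := by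
  set τ : E → ℝ := fun z => sInf {T : ℝ | 0 < T ∧ Φ z T ∈ V} with hτdef
  have hbdd : ∀ z : E, BddBelow {T : ℝ | 0 < T ∧ Φ z T ∈ V} :=
    fun z => ⟨0, fun T hT => hT.1.le⟩
  have hτ0 : ∀ z : E, 0 ≤ τ z :=
    fun z => Real.sInf_nonneg (fun T hT => hT.1.le)
  intro x hx
  rw [Metric.continuousWithinAt_iff]
  intro ε hε
  -- Upper bound part
  obtain ⟨T, hTS, hTlt⟩ := Real.lt_sInf_add_pos (hfin x hx) hε
  obtain ⟨hT0, hTV⟩ := hTS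
  obtain ⟨U, hU, hVU⟩ := hVopen
  have hxU : Φ x T ∈ U := (hVU ▸ hTV).1
  obtain ⟨r, hr, hball⟩ := Metric.isOpen_iff.mp hU _ hxU
  have hexpT : (0:ℝ) < Real.exp (L * T) := Real.exp_pos _
  have hδ₁ : (0:ℝ) < r / Real.exp (L * T) := div_pos hr hexpT
  have upper : ∀ y ∈ D, dist y x < r / Real.exp (L * T) → τ y < τ x + ε := by
    intro y hy hdy
    have h1 : ‖Φ y T - Φ x T‖ ≤ ‖y - x‖ * Real.exp (L * T) :=
      hΦLip y hy x hx T hT0.le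
    have h2 : ‖y - x‖ * Real.exp (L * T) < r := by
      rw [← dist_eq_norm] at *
      calc dist y x * Real.exp (L * T) < (r / Real.exp (L * T)) * Real.exp (L * T) := by
            exact mul_lt_mul_of_pos_right hdy hexpT
        _ = r := div_mul_cancel₀ r hexpT.ne'
    have hmem : Φ y T ∈ Metric.ball (Φ x T) r := by
      rw [Metric.mem_ball, dist_eq_norm]; exact lt_of_le_of_lt h1 h2
    have hyV : Φ y T ∈ V := by
      rw [hVU]; exact ⟨hball hmem, hΦD y hy T hT0.le⟩
    have : τ y ≤ T := csInf_le (hbdd y) ⟨hT0, hyV⟩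
    exact lt_of_le_of_lt this hTlt
  -- Lower bound part
  have lower : ∃ δ₂ > 0, ∀ y ∈ D, dist y x < δ₂ → τ x - ε < τ y := by
    by_cases hcase : τ x < ε
    · exact ⟨1, one_pos, fun y hy _ => lt_of_lt_of_le (by linarith [hτ0 y]) (hτ0 y)⟩
    · push_neg at hcase
      set T₂ : ℝ := τ x - ε / 2 with hT₂def
      have hT₂pos : 0 < T₂ := by simp only [hT₂def]; linarith
      have hT₂lt : T₂ < τ x := by simp only [hT₂def]; linarith
      have hρ := hpos x hx T₂ hT₂pos hT₂lt
      set ρ : ℝ := sInf {ρ : ℝ | ∃ v ∈ V, ∃ t ∈ Set.Icc (0:ℝ) T₂, ρ = ‖Φ x t - v‖} with hρdef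
      have hexp₂ : (0:ℝ) < Real.exp (L * T₂) := Real.exp_pos _
      refine ⟨ρ / Real.exp (L * T₂), div_pos hρ hexp₂, fun y hy hdy => ?_⟩
      have hT₂le : T₂ ≤ τ y := by
        refine le_csInf (hfin y hy) fun T' hT' => ?_
        by_contra hc
        push_neg at hc
        have hmem : ‖Φ x T' - Φ y T'‖ ∈
            {ρ : ℝ | ∃ v ∈ V, ∃ t ∈ Set.Icc (0:ℝ) T₂, ρ = ‖Φ x t - v‖} :=
          ⟨Φ y T', hT'.2, T', ⟨hT'.1.le, hc.le⟩, rfl⟩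
        have hge : ρ ≤ ‖Φ x T' - Φ y T'‖ := by
          refine csInf_le ⟨0, fun a ha => ?_⟩ hmem
          obtain ⟨v, _, t, _, rfl⟩ := ha
          exact norm_nonneg _
        have h1 : ‖Φ x T' - Φ y T'‖ ≤ ‖x - y‖ * Real.exp (L * T') :=
          hΦLip x hx y hy T' hT'.1.le
        have h2 : ‖x - y‖ * Real.exp (L * T') ≤ ‖x - y‖ * Real.exp (L * T₂) := by
          apply mul_le_mul_of_nonneg_left _ (norm_nonneg _)
          exact Real.exp_le_exp.mpr (mul_le_mul_of_nonneg_left hc.le hL.le)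
        have h3 : ‖x - y‖ * Real.exp (L * T₂) < ρ := by
          have : ‖x - y‖ < ρ / Real.exp (L * T₂) := by
            rw [norm_sub_rev, ← dist_eq_norm] at *; exact hdy
          calc ‖x - y‖ * Real.exp (L * T₂)
              < (ρ / Real.exp (L * T₂)) * Real.exp (L * T₂) :=
                mul_lt_mul_of_pos_right this hexp₂
            _ = ρ := div_mul_cancel₀ ρ hexp₂.ne'
        linarith
      simp only [hT₂def] at hT₂le
      linarith
  obtain ⟨δ₂, hδ₂, hlow⟩ := lower
  refine ⟨min (r / Real.exp (L * T)) δ₂, lt_min hδ₁ hδ₂, fun {y} hy hdy => ?_⟩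
  have h1 := upper y hy (lt_of_lt_of_le hdy (min_le_left _ _))
  have h2 := hlow y hy (lt_of_lt_of_le hdy (min_le_right _ _))
  rw [Real.dist_eq, abs_sub_lt_iff]
  constructor <;> linarith
end
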